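/- arXiv:2102.10567 — 13 statements merged into one kernel-verified Lean document; each statement's English description precedes it below -/
import Mathlib

section
/- Let T > 0, λ > 1/2, d > 0, b > 0, ε ≥ 0, and let F : ℝ → [0,1] be a cumulative distribution function; set p := 1 − F(b + ε). On a probability space, let N be a Poisson random variable with mean λ·T and let (X_i)_{i∈ℕ} be an i.i.d. sequence of Bernoulli(p) random variables independent of N. Define the random variable B := b·(1 + d·(min(T, Σ_{i=1}^{N} X_i) − T/2)/(T/2)). Then E[B] ≤ b + b·d·min(1, 2λ·p − 1). -/
open MeasureTheory ProbabilityTheory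
open scoped ENNReal

private lemma summable_k_pow_div_factorial (x : ℝ) :
    Summable (fun k : ℕ => (k : ℝ) * (x ^ k / k.factorial)) := by
  have hshift : ∀ k : ℕ, ((k + 1 : ℕ) : ℝ) * (x ^ (k + 1) / (k + 1).factorial)
      = x * (x ^ k / k.factorial) := by
    intro k
    have h1 : (k.factorial : ℝ) ≠ 0 := Nat.cast_ne_zero.2 k.factorial_ne_zero
    rw [Nat.factorial_succ]
    push_cast
    field_simp
    ring
  rw [← summable_nat_add_iff 1]
  simpa only [hshift] using (Real.summable_pow_div_factorial x).mul_left x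

private lemma tsum_k_pow_div_factorial (x : ℝ) :
    ∑' k : ℕ, (k : ℝ) * (x ^ k / k.factorial) = x * Real.exp x := by
  have hexp : Real.exp x = ∑' n : ℕ, x ^ n / n.factorial := by
    rw [Real.exp_eq_exp_ℝ, NormedSpace.exp_eq_tsum_div]
  have hshift : ∀ k : ℕ, ((k + 1 : ℕ) : ℝ) * (x ^ (k + 1) / (k + 1).factorial)
      = x * (x ^ k / k.factorial) := by
    intro k
    have h1 : (k.factorial : ℝ) ≠ 0 := Nat.cast_ne_zero.2 k.factorial_ne_zero
    rw [Nat.factorial_succ]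
    push_cast
    field_simp
    ring
  rw [Summable.tsum_eq_zero_add (summable_k_pow_div_factorial x)]
  simp only [Nat.cast_zero, zero_mul, zero_add]
  calc ∑' k : ℕ, ((k + 1 : ℕ) : ℝ) * (x ^ (k + 1) / (k + 1).factorial)
      = ∑' k : ℕ, x * (x ^ k / k.factorial) := tsum_congr hshift
    _ = x * Real.exp x := by rw [tsum_mul_left, hexp]

/-- One-step conditional expectation bound for the EIP-1559 base fee update:
with `p = 1 − F(b+ε)`, `N ~ Poisson(λT)` and `(X_i)` i.i.d. Bernoulli(`p`) independent of `N`,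
the random variable `B = b·(1 + d·(min(T, ∑_{i=1}^{N} X_i) − T/2)/(T/2))` satisfies
`E[B] ≤ b + b·d·min(1, 2λ·p − 1)`. -/
theorem expectation_base_fee_update_le
    {Ω : Type*} [MeasurableSpace Ω] (μ : Measure Ω) [IsProbabilityMeasure μ]
    (T lam d b ε : ℝ) (hT : 0 < T) (hlam : 1 / 2 < lam) (hd : 0 < d) (hb : 0 < b)
    (hε : 0 ≤ ε)
    -- `F` is a cumulative distribution function with values in `[0,1]`
    (F : ℝ → ℝ) (hFmono : Monotone F) (hF0 : ∀ x, 0 ≤ F x) (hF1 : ∀ x, F x ≤ 1)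
    (p : ℝ) (hp : p = 1 - F (b + ε))
    (N : Ω → ℕ) (X : ℕ → Ω → ℝ)
    (hNmeas : Measurable N) (hXmeas : ∀ i, Measurable (X i))
    -- `N` is Poisson with mean `λ·T`
    (hPoisson : ∀ k : ℕ,
      μ {ω | N ω = k} = ENNReal.ofReal (Real.exp (-(lam * T)) * (lam * T) ^ k / k.factorial))
    -- each `X i` is Bernoulli(`p`)
    (hBernoulli : ∀ i, (∀ ω, X i ω = 0 ∨ X i ω = 1) ∧ μ {ω | X i ω = 1} = ENNReal.ofReal p)
    -- the sequence `(X_i)` is (mutually) independent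
    (hiid : iIndepFun X μ)
    -- the sequence `(X_i)` is independent of `N`
    (hindep : Indep (⨆ i, MeasurableSpace.comap (X i) inferInstance)
      (MeasurableSpace.comap N inferInstance) μ)
    (B : Ω → ℝ)
    (hB : ∀ ω, B ω =
      b * (1 + d * (min T (∑ i ∈ Finset.range (N ω), X i ω) - T / 2) / (T / 2))) :
    ∫ ω, B ω ∂μ ≤ b + b * d * min 1 (2 * lam * p - 1) := by
  set x : ℝ := lam * T with hxdef
  have hlam0 : 0 < lam := by linarith
  have hxpos : 0 < x := by positivity
  have hp0 : 0 ≤ p := by rw [hp]; linarith [hF1 (b + ε)]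
  set S : Ω → ℝ := fun ω => ∑ i ∈ Finset.range (N ω), X i ω with hSdef
  set m : Ω → ℝ := fun ω => min T (S ω) with hmdef
  have hXnn : ∀ i ω, 0 ≤ X i ω := by
    intro i ω; rcases (hBernoulli i).1 ω with h | h <;> simp [h]
  have hSnn : ∀ ω, 0 ≤ S ω := fun ω => Finset.sum_nonneg fun i _ => hXnn i ω
  have hsum_meas : ∀ k : ℕ, Measurable (fun ω => ∑ i ∈ Finset.range k, X i ω) :=
    fun k => Finset.measurable_sum _ fun i _ => hXmeas i
  have hSmeas : Measurable S := by
    have h1 : Measurable (fun q : Ω × ℕ => ∑ i ∈ Finset.range q.2, X i q.1) :=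
      measurable_from_prod_countable_left fun k => hsum_meas k
    exact h1.comp (measurable_id.prodMk hNmeas)
  have hmmeas : Measurable m := measurable_const.min hSmeas
  have hm_nn : ∀ ω, 0 ≤ m ω := fun ω => le_min hT.le (hSnn ω)
  have hm_le_T : ∀ ω, m ω ≤ T := fun ω => min_le_left _ _
  have hmint : Integrable m μ := by
    refine ⟨hmmeas.aestronglyMeasurable, HasFiniteIntegral.of_bounded (C := T) ?_⟩
    filter_upwards with ω
    rw [Real.norm_eq_abs, abs_of_nonneg (hm_nn ω)]
    exact hm_le_T ω
  -- the σ-algebras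
  have hMf_le : (⨆ i, MeasurableSpace.comap (X i) inferInstance) ≤ ‹MeasurableSpace Ω› :=
    iSup_le fun i => measurable_iff_comap_le.1 (hXmeas i)
  have hMg_le : MeasurableSpace.comap N inferInstance ≤ ‹MeasurableSpace Ω› :=
    measurable_iff_comap_le.1 hNmeas
  have hXmeas_Mf : ∀ i, Measurable[⨆ i, MeasurableSpace.comap (X i) inferInstance] (X i) :=
    fun i => (Measurable.of_comap_le le_rfl).mono
      (le_iSup (fun i => MeasurableSpace.comap (X i) inferInstance) i) le_rfl
  have hNmeas_Mg : Measurable[MeasurableSpace.comap N inferInstance] N :=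
    Measurable.of_comap_le le_rfl
  -- lintegral of each X i
  have hXlint : ∀ i, ∫⁻ ω, ENNReal.ofReal (X i ω) ∂μ = ENNReal.ofReal p := by
    intro i
    have hind : (fun ω => ENNReal.ofReal (X i ω))
        = Set.indicator {ω | X i ω = 1} (fun _ => 1) := by
      ext ω
      rcases (hBernoulli i).1 ω with h | h
      · simp [Set.indicator_apply, h]
      · simp [Set.indicator_apply, h]
    have hset : MeasurableSet {ω | X i ω = 1} := (hXmeas i) (measurableSet_singleton 1)
    rw [hind, lintegral_indicator hset _]
    simp [(hBernoulli i).2]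
  -- the per-k product formula
  have hkey : ∀ k : ℕ, ∫⁻ ω, Set.indicator {ω | N ω = k}
      (fun ω => ENNReal.ofReal (∑ i ∈ Finset.range k, X i ω)) ω ∂μ
      = ((k : ℝ≥0∞) * ENNReal.ofReal p) * μ {ω | N ω = k} := by
    intro k
    have heq : ∀ ω, Set.indicator {ω | N ω = k}
        (fun ω => ENNReal.ofReal (∑ i ∈ Finset.range k, X i ω)) ω
        = ENNReal.ofReal (∑ i ∈ Finset.range k, X i ω)
          * ({k} : Set ℕ).indicator (fun _ => (1 : ℝ≥0∞)) (N ω) := by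
      intro ω
      by_cases h : N ω = k <;> simp [Set.indicator_apply, h]
    simp_rw [heq]
    have hmeasf : Measurable[⨆ i, MeasurableSpace.comap (X i) inferInstance]
        (fun ω => ENNReal.ofReal (∑ i ∈ Finset.range k, X i ω)) :=
      ENNReal.measurable_ofReal.comp (Finset.measurable_sum _ fun i _ => hXmeas_Mf i)
    have hmeasg : Measurable[MeasurableSpace.comap N inferInstance]
        (fun ω => ({k} : Set ℕ).indicator (fun _ => (1 : ℝ≥0∞)) (N ω)) := by
      exact (Measurable.indicator measurable_const (measurableSet_singleton k)).comp hNmeas_Mg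
    rw [lintegral_mul_eq_lintegral_mul_lintegral_of_independent_measurableSpace
      hMf_le hMg_le hindep hmeasf hmeasg]
    congr 1
    · -- ∫⁻ ofReal (sum) = k * ofReal p
      have : ∀ ω, ENNReal.ofReal (∑ i ∈ Finset.range k, X i ω)
          = ∑ i ∈ Finset.range k, ENNReal.ofReal (X i ω) := fun ω =>
        ENNReal.ofReal_sum_of_nonneg fun i _ => hXnn i ω
      simp_rw [this]
      rw [lintegral_finset_sum (Finset.range k)
        (fun i _ => ((hXmeas i).ennreal_ofReal : Measurable fun ω => ENNReal.ofReal (X i ω)))]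
      simp [hXlint, Finset.sum_const, mul_comm]
    · -- ∫⁻ indicator = μ {N = k}
      have : (fun ω => ({k} : Set ℕ).indicator (fun _ => (1 : ℝ≥0∞)) (N ω))
          = Set.indicator {ω | N ω = k} (fun _ => 1) := by
        ext ω; by_cases h : N ω = k <;> simp [Set.indicator_apply, h]
      have hset2 : MeasurableSet {ω | N ω = k} := hNmeas (measurableSet_singleton k)
      rw [this, lintegral_indicator hset2 _]
      simp
  -- bound the lintegral of m
  have hL : ∫⁻ ω, ENNReal.ofReal (m ω) ∂μ ≤ ENNReal.ofReal (x * p) := by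
    have hmono : ∀ ω, ENNReal.ofReal (m ω) ≤ ∑' k : ℕ, Set.indicator {ω | N ω = k}
        (fun ω => ENNReal.ofReal (∑ i ∈ Finset.range k, X i ω)) ω := by
      intro ω
      refine le_trans ?_ (ENNReal.le_tsum (N ω))
      have : ω ∈ {ω' | N ω' = N ω} := rfl
      rw [Set.indicator_of_mem this]
      exact ENNReal.ofReal_le_ofReal (min_le_right _ _)
    calc ∫⁻ ω, ENNReal.ofReal (m ω) ∂μ
        ≤ ∫⁻ ω, ∑' k : ℕ, Set.indicator {ω | N ω = k}
            (fun ω => ENNReal.ofReal (∑ i ∈ Finset.range k, X i ω)) ω ∂μ :=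
          lintegral_mono hmono
      _ = ∑' k : ℕ, ∫⁻ ω, Set.indicator {ω | N ω = k}
            (fun ω => ENNReal.ofReal (∑ i ∈ Finset.range k, X i ω)) ω ∂μ := by
          refine lintegral_tsum fun k => ?_
          exact ((ENNReal.measurable_ofReal.comp (hsum_meas k)).indicator
            (hNmeas (measurableSet_singleton k))).aemeasurable
      _ = ∑' k : ℕ, ((k : ℝ≥0∞) * ENNReal.ofReal p) * μ {ω | N ω = k} := by
          exact tsum_congr hkey
      _ = ∑' k : ℕ, ENNReal.ofReal ((k : ℝ) * p * (Real.exp (-x) * x ^ k / k.factorial)) := by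
          refine tsum_congr fun k => ?_
          rw [hPoisson k]
          rw [← ENNReal.ofReal_natCast k, ← ENNReal.ofReal_mul (by positivity),
            ← ENNReal.ofReal_mul (by positivity)]
      _ = ENNReal.ofReal (∑' k : ℕ, (k : ℝ) * p * (Real.exp (-x) * x ^ k / k.factorial)) := by
          refine (ENNReal.ofReal_tsum_of_nonneg (fun k => ?_) ?_).symm
          · have := Real.exp_pos (-x); positivity
          · have heq : ∀ k : ℕ, (k : ℝ) * p * (Real.exp (-x) * x ^ k / k.factorial)
                = (p * Real.exp (-x)) * ((k : ℝ) * (x ^ k / k.factorial)) := by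
              intro k; ring
            simp_rw [heq]
            exact (summable_k_pow_div_factorial x).mul_left _
      _ = ENNReal.ofReal (x * p) := by
          congr 1
          have heq : ∀ k : ℕ, (k : ℝ) * p * (Real.exp (-x) * x ^ k / k.factorial)
              = (p * Real.exp (-x)) * ((k : ℝ) * (x ^ k / k.factorial)) := by
            intro k; ring
          simp_rw [heq]
          rw [tsum_mul_left, tsum_k_pow_div_factorial x]
          rw [Real.exp_neg]
          have := (Real.exp_pos x).ne'
          field_simp
  -- ∫ m ≤ x * p
  have hI_le : ∫ ω, m ω ∂μ ≤ x * p := by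
    rw [integral_eq_lintegral_of_nonneg_ae (ae_of_all μ hm_nn) hmmeas.aestronglyMeasurable]
    calc (∫⁻ ω, ENNReal.ofReal (m ω) ∂μ).toReal
        ≤ (ENNReal.ofReal (x * p)).toReal :=
          ENNReal.toReal_mono ENNReal.ofReal_ne_top hL
      _ = x * p := ENNReal.toReal_ofReal (by positivity)
  have hI_le_T : ∫ ω, m ω ∂μ ≤ T := by
    calc ∫ ω, m ω ∂μ ≤ ∫ _, T ∂μ := integral_mono hmint (integrable_const T) hm_le_T
      _ = T := by simp
  -- rewrite B
  have hBeq : ∀ ω, B ω = (b - b * d) + (2 * b * d / T) * m ω := by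
    intro ω
    rw [hB ω]
    have hT' : T ≠ 0 := hT.ne'
    field_simp
    ring
  have hintB : ∫ ω, B ω ∂μ = (b - b * d) + (2 * b * d / T) * ∫ ω, m ω ∂μ := by
    simp_rw [hBeq]
    rw [integral_add (integrable_const _) (hmint.const_mul _), integral_const,
      integral_const_mul]
    simp
  rw [hintB]
  have hc : (0 : ℝ) < 2 * b * d / T := by positivity
  have hcT : (2 * b * d / T) * T = 2 * b * d := by field_simp
  have hcxp : (2 * b * d / T) * (x * p) = 2 * b * d * lam * p := by
    rw [hxdef]; field_simp
  rcases le_or_gt 1 (2 * lam * p - 1) with h | h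
  · rw [min_eq_left h]
    nlinarith [mul_le_mul_of_nonneg_left hI_le_T hc.le]
  · rw [min_eq_right h.le]
    nlinarith [mul_le_mul_of_nonneg_left hI_le hc.le]
end

section
/- Let F : ℝ → [0,1] be a continuous and strictly increasing cumulative distribution function, let λ > 1/2, ε ≥ 0, d ∈ (0,1), and suppose there exists b* > 0 with F(b* + ε) = 1 − 1/(2λ). Define g(b) = b + b·d·min(1, 2λ·(1 − F(b + ε)) − 1) for b > 0. Then for every b > 0, g(b) = b if and only if b = b*. In other words, b* = F^{-1}(1 − 1/(2λ)) − ε is the unique positive fixed point of the non-atomic base fee dynamics. -/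
/-- For a continuous, strictly increasing CDF `F`, arrival rate `λ > 1/2`,
premium `ε ≥ 0`, step size `d ∈ (0,1)`, and `b* > 0` with `F(b* + ε) = 1 − 1/(2λ)`, the point
`b*` is the unique positive fixed point of the non-atomic base fee map
`g(b) = b + b·d·min(1, 2λ·(1 − F(b+ε)) − 1)`. -/
theorem base_fee_unique_fixed_point
    (F : ℝ → ℝ) (hFcont : Continuous F) (hFmono : StrictMono F)
    (hF0 : ∀ x, 0 ≤ F x) (hF1 : ∀ x, F x ≤ 1)
    (lam ε d bstar : ℝ) (hlam : 1 / 2 < lam) (hε : 0 ≤ ε) (hd0 : 0 < d) (hd1 : d < 1)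
    (hbstar : 0 < bstar) (hfix : F (bstar + ε) = 1 - 1 / (2 * lam))
    (g : ℝ → ℝ) (hg : ∀ b, g b = b + b * d * min 1 (2 * lam * (1 - F (b + ε)) - 1)) :
    ∀ b : ℝ, 0 < b → (g b = b ↔ b = bstar) := by
  intro b hb
  have hlam0 : (0:ℝ) < lam := lt_trans (by norm_num) hlam
  constructor
  · intro hfb
    have h0 : b * d * min 1 (2 * lam * (1 - F (b + ε)) - 1) = 0 := by
      have := hg b
      rw [hfb] at this
      linarith
    have hbd : b * d ≠ 0 := by positivity
    have hmin : min 1 (2 * lam * (1 - F (b + ε)) - 1) = 0 := by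
      rcases mul_eq_zero.mp h0 with h | h
      · exact absurd h hbd
      · exact h
    have hx : 2 * lam * (1 - F (b + ε)) - 1 = 0 := by
      rcases min_eq_iff.mp hmin with ⟨h1, _⟩ | ⟨h2, _⟩
      · norm_num at h1
      · exact h2
    have hFb : F (b + ε) = 1 - 1 / (2 * lam) := by
      field_simp at hx ⊢
      linarith
    have := hFmono.injective (hFb.trans hfix.symm)
    linarith
  · intro hb'
    subst hb'
    rw [hg, hfix]
    have : 2 * lam * (1 - (1 - 1 / (2 * lam))) - 1 = 0 := by
      field_simp
      ring
    rw [this]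
    simp
end

section
/- Let F : ℝ → [0,1] be a continuous and strictly increasing cumulative distribution function, let λ > 1/2, ε ≥ 0, d ∈ (0,1), and suppose there exists b* > 0 with F(b* + ε) = 1 − 1/(2λ). Define g(b) = b + b·d·min(1, 2λ·(1 − F(b + ε)) − 1) for b > 0. Then: (i) for every b with 0 < b < b*, g(b) > b; and (ii) for every b > b*, g(b) < b. Consequently b* is directionally stable: whenever b ≠ b*, the update moves in the direction of b*, i.e. (g(b) − b)/(b − b*) < 0. -/
/-- Directional stability of the fixed point `b*` of the non-atomic base fee
map `g(b) = b + b·d·min(1, 2λ·(1 − F(b+ε)) − 1)`: below `b*` the map moves up, above `b*` it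
moves down, and consequently `(g(b) − b)/(b − b*) < 0` whenever `b ≠ b*`. -/
theorem base_fee_directionally_stable
    (F : ℝ → ℝ) (hFcont : Continuous F) (hFmono : StrictMono F)
    (hF0 : ∀ x, 0 ≤ F x) (hF1 : ∀ x, F x ≤ 1)
    (lam ε d bstar : ℝ) (hlam : 1 / 2 < lam) (hε : 0 ≤ ε) (hd0 : 0 < d) (hd1 : d < 1)
    (hbstar : 0 < bstar) (hfix : F (bstar + ε) = 1 - 1 / (2 * lam))
    (g : ℝ → ℝ) (hg : ∀ b, g b = b + b * d * min 1 (2 * lam * (1 - F (b + ε)) - 1)) :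
    (∀ b : ℝ, 0 < b → b < bstar → g b > b) ∧
    (∀ b : ℝ, bstar < b → g b < b) ∧
    (∀ b : ℝ, 0 < b → b ≠ bstar → (g b - b) / (b - bstar) < 0) := by
  have hlam0 : (0:ℝ) < lam := lt_trans (by norm_num) hlam
  have h2lam : (0:ℝ) < 2 * lam := by linarith
  have hup : ∀ b : ℝ, 0 < b → b < bstar → g b > b := by
    intro b hb hblt
    have hF : F (b + ε) < F (bstar + ε) := hFmono (by linarith)
    have hFval : F (b + ε) < 1 - 1 / (2 * lam) := by rwa [hfix] at hF
    have hpos : 0 < 2 * lam * (1 - F (b + ε)) - 1 := by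
      have : 1 / (2 * lam) < 1 - F (b + ε) := by linarith
      have := (div_lt_iff₀ h2lam).mp this
      nlinarith
    have hminpos : 0 < min 1 (2 * lam * (1 - F (b + ε)) - 1) :=
      lt_min one_pos hpos
    have : 0 < b * d * min 1 (2 * lam * (1 - F (b + ε)) - 1) :=
      mul_pos (mul_pos hb hd0) hminpos
    rw [hg b]; linarith
  have hdown : ∀ b : ℝ, bstar < b → g b < b := by
    intro b hblt
    have hb : 0 < b := lt_trans hbstar hblt
    have hF : F (bstar + ε) < F (b + ε) := hFmono (by linarith)
    have hFval : 1 - 1 / (2 * lam) < F (b + ε) := by rwa [hfix] at hF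
    have hneg : 2 * lam * (1 - F (b + ε)) - 1 < 0 := by
      have : 1 - F (b + ε) < 1 / (2 * lam) := by linarith
      have := (lt_div_iff₀ h2lam).mp this
      nlinarith
    have hminneg : min 1 (2 * lam * (1 - F (b + ε)) - 1) < 0 := by
      rw [min_eq_right (by linarith : 2 * lam * (1 - F (b + ε)) - 1 ≤ 1)]
      exact hneg
    have : b * d * min 1 (2 * lam * (1 - F (b + ε)) - 1) < 0 :=
      mul_neg_of_pos_of_neg (mul_pos hb hd0) hminneg
    rw [hg b]; linarith
  refine ⟨hup, hdown, ?_⟩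
  intro b hb hne
  rcases lt_or_gt_of_ne hne with h | h
  · exact div_neg_of_pos_of_neg (by linarith [hup b hb h]) (by linarith)
  · exact div_neg_of_neg_of_pos (by linarith [hdown b h]) (by linarith)
end

section
/- Let F : ℝ → [0,1] be a continuous and strictly increasing cumulative distribution function, let λ > 1/2, ε ≥ 0, d ∈ (0,1), and suppose there exists b* > 0 with F(b* + ε) = 1 − 1/(2λ). Define g(b) = b + b·d·min(1, 2λ·(1 − F(b + ε)) − 1) for b > 0. Then the interval [(1−d)·b*, (1+d)·b*] is forward invariant under g: if b ∈ [(1−d)·b*, (1+d)·b*] then g(b) ∈ [(1−d)·b*, (1+d)·b*]. -/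
/-- The interval `[(1−d)·b*, (1+d)·b*]` is forward invariant under the
non-atomic base fee map `g(b) = b + b·d·min(1, 2λ·(1 − F(b+ε)) − 1)`. -/
theorem base_fee_trapping_region
    (F : ℝ → ℝ) (hFcont : Continuous F) (hFmono : StrictMono F)
    (hF0 : ∀ x, 0 ≤ F x) (hF1 : ∀ x, F x ≤ 1)
    (lam ε d bstar : ℝ) (hlam : 1 / 2 < lam) (hε : 0 ≤ ε) (hd0 : 0 < d) (hd1 : d < 1)
    (hbstar : 0 < bstar) (hfix : F (bstar + ε) = 1 - 1 / (2 * lam))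
    (g : ℝ → ℝ) (hg : ∀ b, g b = b + b * d * min 1 (2 * lam * (1 - F (b + ε)) - 1)) :
    ∀ b : ℝ, b ∈ Set.Icc ((1 - d) * bstar) ((1 + d) * bstar) →
      g b ∈ Set.Icc ((1 - d) * bstar) ((1 + d) * bstar) := by
  intro b hb
  obtain ⟨hbl, hbr⟩ := hb
  have hlam0 : (0:ℝ) < lam := lt_trans (by norm_num) hlam
  have hb0 : 0 ≤ b := le_trans (by nlinarith) hbl
  set m := min 1 (2 * lam * (1 - F (b + ε)) - 1) with hm
  have hm1 : m ≤ 1 := min_le_left _ _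
  have hgb : g b = b + b * d * m := hg b
  constructor
  · -- lower bound
    rcases le_total b bstar with hcase | hcase
    · -- b ≤ b*, m ≥ 0, g b ≥ b ≥ (1-d) b*
      have hF : F (b + ε) ≤ F (bstar + ε) :=
        hFmono.monotone (by linarith)
      have hm0 : 0 ≤ m := by
        apply le_min (by norm_num)
        have hFle : F (b + ε) ≤ 1 - 1 / (2 * lam) := hfix ▸ hF
        have h2l : (0:ℝ) < 2 * lam := by linarith
        have h1 : 1 / (2 * lam) ≤ 1 - F (b + ε) := by linarith
        have h2 := mul_le_mul_of_nonneg_left h1 h2l.le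
        rw [mul_one_div, div_self (ne_of_gt h2l)] at h2
        linarith
      rw [hgb]
      nlinarith [mul_nonneg (mul_nonneg hb0 hd0.le) hm0]
    · -- b ≥ b*, m ≥ -1, g b ≥ (1-d) b ≥ (1-d) b*
      have hmneg : -1 ≤ m := by
        apply le_min (by norm_num)
        have := hF1 (b + ε)
        nlinarith
      rw [hgb]
      nlinarith [mul_le_mul_of_nonneg_left hmneg (mul_nonneg hb0 hd0.le)]
  · rcases le_total b bstar with hcase | hcase
    · rw [hgb]
      nlinarith [mul_le_mul_of_nonneg_left hm1 (mul_nonneg hb0 hd0.le)]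
    · have hF : F (bstar + ε) ≤ F (b + ε) :=
        hFmono.monotone (by linarith)
      have hm0 : m ≤ 0 := by
        refine le_trans (min_le_right _ _) ?_
        rw [hfix] at hF
        have h2l : (0:ℝ) < 2 * lam := by linarith
        have : 1 - 1 / (2 * lam) ≤ F (b + ε) := hF
        have h1 : 2 * lam * (1 - F (b + ε)) ≤ 2 * lam * (1 / (2 * lam)) := by
          apply mul_le_mul_of_nonneg_left _ (le_of_lt h2l)
          linarith
        rw [mul_one_div, div_self (ne_of_gt h2l)] at h1
        linarith
      rw [hgb]
      nlinarith [mul_nonpos_of_nonneg_of_nonpos (mul_nonneg hb0 hd0.le) hm0]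
end

section
/- Let F : ℝ → [0,1] be a continuous and strictly increasing cumulative distribution function, let λ > 1/2, ε ≥ 0, d ∈ (0,1), and suppose there exists b* > 0 with F(b* + ε) = 1 − 1/(2λ). Define g(b) = b + b·d·min(1, 2λ·(1 − F(b + ε)) − 1) for b > 0 and, for any initial condition b_0 > 0, set b_{t+1} = g(b_t). Then there exists t̄ ∈ ℕ such that b_t ∈ [(1−d)·b*, (1+d)·b*] for all t ≥ t̄; i.e., the interval [(1−d)·b*, (1+d)·b*] is globally attracting for the base fee dynamics. -/
/-- The interval `[(1−d)·b*, (1+d)·b*]` is globally attracting for the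
non-atomic base fee dynamics `b_{t+1} = g(b_t)` with
`g(b) = b + b·d·min(1, 2λ·(1 − F(b+ε)) − 1)`: from any initial condition `b_0 > 0` the
trajectory eventually enters (and stays in) this interval. -/
theorem base_fee_globally_attracting
    (F : ℝ → ℝ) (hFcont : Continuous F) (hFmono : StrictMono F)
    (hF0 : ∀ x, 0 ≤ F x) (hF1 : ∀ x, F x ≤ 1)
    (lam ε d bstar : ℝ) (hlam : 1 / 2 < lam) (hε : 0 ≤ ε) (hd0 : 0 < d) (hd1 : d < 1)
    (hbstar : 0 < bstar) (hfix : F (bstar + ε) = 1 - 1 / (2 * lam))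
    (g : ℝ → ℝ) (hg : ∀ b, g b = b + b * d * min 1 (2 * lam * (1 - F (b + ε)) - 1))
    (b : ℕ → ℝ) (hb0 : 0 < b 0) (hbrec : ∀ t, b (t + 1) = g (b t)) :
    ∃ tbar : ℕ, ∀ t ≥ tbar, b t ∈ Set.Icc ((1 - d) * bstar) ((1 + d) * bstar) := by
  have hlam0 : (0:ℝ) < lam := by linarith
  set m : ℝ → ℝ := fun x => min 1 (2 * lam * (1 - F (x + ε)) - 1) with hm
  have hg' : ∀ x, g x = x * (1 + d * m x) := by intro x; rw [hg]; simp only [hm]; ring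
  have hm_le : ∀ x, m x ≤ 1 := fun x => min_le_left _ _
  have hm_ge : ∀ x, -1 ≤ m x := by
    intro x
    have h1 : F (x + ε) ≤ 1 := hF1 _
    have h2 : (0:ℝ) ≤ 2 * lam * (1 - F (x + ε)) :=
      mul_nonneg (by linarith) (by linarith)
    exact le_min (by norm_num) (by linarith)
  have hm_anti : ∀ x y, x ≤ y → m y ≤ m x := by
    intro x y hxy
    have hF : F (x + ε) ≤ F (y + ε) := hFmono.monotone (by linarith)
    exact min_le_min le_rfl (by nlinarith)
  have hmstar : m bstar = 0 := by
    have h0 : 2 * lam * (1 - F (bstar + ε)) - 1 = 0 := by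
      rw [hfix]; field_simp; ring
    simp only [hm, h0]
    norm_num
  have hm_pos : ∀ x, x < bstar → 0 < m x := by
    intro x hx
    have hF : F (x + ε) < F (bstar + ε) := hFmono (by linarith)
    rw [hfix] at hF
    have h2 : 0 < 2 * lam * (1 - F (x + ε)) - 1 := by
      have : 2 * lam * (1 - F (x + ε)) > 2 * lam * (1 / (2 * lam)) := by
        apply mul_lt_mul_of_pos_left _ (by linarith : (0:ℝ) < 2 * lam)
        linarith
      have h3 : 2 * lam * (1 / (2 * lam)) = 1 := by field_simp
      linarith
    exact lt_min one_pos h2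
  have hm_neg : ∀ x, bstar < x → m x < 0 := by
    intro x hx
    have hF : F (bstar + ε) < F (x + ε) := hFmono (by linarith)
    rw [hfix] at hF
    have h2 : 2 * lam * (1 - F (x + ε)) - 1 < 0 := by
      have : 2 * lam * (1 - F (x + ε)) < 2 * lam * (1 / (2 * lam)) := by
        apply mul_lt_mul_of_pos_left _ (by linarith : (0:ℝ) < 2 * lam)
        linarith
      have h3 : 2 * lam * (1 / (2 * lam)) = 1 := by field_simp
      linarith
    exact lt_of_le_of_lt (min_le_right _ _) h2
  -- positivity of the trajectory
  have hbpos : ∀ t, 0 < b t := by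
    intro t
    induction t with
    | zero => exact hb0
    | succ n ih =>
      rw [hbrec, hg']
      have h1 : 0 < 1 + d * m (b n) := by nlinarith [hm_ge (b n)]
      exact mul_pos ih h1
  -- bounds on one step
  have hg_lb : ∀ x, 0 < x → (1 - d) * x ≤ g x := by
    intro x hx; rw [hg']
    nlinarith [hm_ge x, mul_nonneg (mul_nonneg hx.le hd0.le) (by linarith [hm_ge x] : (0:ℝ) ≤ m x + 1)]
  have hg_ub : ∀ x, 0 < x → g x ≤ (1 + d) * x := by
    intro x hx; rw [hg']
    nlinarith [hm_le x, mul_nonneg (mul_nonneg hx.le hd0.le) (by linarith [hm_le x] : (0:ℝ) ≤ 1 - m x)]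
  have hg_incr : ∀ x, 0 < x → x ≤ bstar → x ≤ g x := by
    intro x hx hxb
    have h0 : 0 ≤ m x := by
      have := hm_anti x bstar hxb; rw [hmstar] at this; linarith
    rw [hg']; nlinarith [mul_nonneg (mul_nonneg hx.le hd0.le) h0]
  have hg_decr : ∀ x, 0 < x → bstar ≤ x → g x ≤ x := by
    intro x hx hxb
    have h0 : m x ≤ 0 := by
      have := hm_anti bstar x hxb; rw [hmstar] at this; linarith
    rw [hg']; nlinarith [mul_nonneg (mul_nonneg hx.le hd0.le) (neg_nonneg.mpr h0)]
  -- invariance of the lower bound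
  have inv_lb : ∀ x, 0 < x → (1 - d) * bstar ≤ x → (1 - d) * bstar ≤ g x := by
    intro x hx hxl
    rcases le_total x bstar with h | h
    · linarith [hg_incr x hx h]
    · calc (1 - d) * bstar ≤ (1 - d) * x := by nlinarith
        _ ≤ g x := hg_lb x hx
  -- invariance of the upper bound
  have inv_ub : ∀ x, 0 < x → x ≤ (1 + d) * bstar → g x ≤ (1 + d) * bstar := by
    intro x hx hxu
    rcases le_total x bstar with h | h
    · calc g x ≤ (1 + d) * x := hg_ub x hx
        _ ≤ (1 + d) * bstar := by nlinarith
    · linarith [hg_decr x hx h]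
  -- Step 1: the trajectory eventually reaches the lower bound
  have step1 : ∃ t1, (1 - d) * bstar ≤ b t1 := by
    by_contra hcon
    push_neg at hcon
    set δ : ℝ := m ((1 - d) * bstar) with hδ
    have hδpos : 0 < δ := hm_pos _ (by nlinarith)
    have hgrow : ∀ t, b 0 * (1 + d * δ) ^ t ≤ b t := by
      intro t
      induction t with
      | zero => simp
      | succ n ih =>
        have hmn : δ ≤ m (b n) := hm_anti _ _ (le_of_lt (hcon n))
        have h1 : b n * (1 + d * δ) ≤ b n * (1 + d * m (b n)) := by
          apply mul_le_mul_of_nonneg_left _ (hbpos n).le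
          nlinarith
        rw [hbrec, hg', pow_succ, ← mul_assoc]
        calc b 0 * (1 + d * δ) ^ n * (1 + d * δ)
            ≤ b n * (1 + d * δ) := by
              apply mul_le_mul_of_nonneg_right ih
              nlinarith
          _ ≤ b n * (1 + d * m (b n)) := h1
    obtain ⟨n, hn⟩ := pow_unbounded_of_one_lt ((1 - d) * bstar / b 0)
      (by nlinarith : (1:ℝ) < 1 + d * δ)
    have : (1 - d) * bstar < b 0 * (1 + d * δ) ^ n := by
      rw [div_lt_iff₀ hb0] at hn; linarith
    exact absurd (hcon n) (not_lt.mpr (le_trans this.le (hgrow n)))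
  obtain ⟨t1, ht1⟩ := step1
  -- Step 2: the lower bound persists
  have step2 : ∀ t, t1 ≤ t → (1 - d) * bstar ≤ b t := by
    intro t ht
    induction t, ht using Nat.le_induction with
    | base => exact ht1
    | succ n hn ih => rw [hbrec]; exact inv_lb _ (hbpos n) ih
  -- Step 3: the trajectory eventually drops below the upper bound
  have step3 : ∃ t2, t1 ≤ t2 ∧ b t2 ≤ (1 + d) * bstar := by
    by_contra hcon
    push_neg at hcon
    set η : ℝ := -m ((1 + d) * bstar) with hη
    have hηpos : 0 < η := by
      have := hm_neg ((1 + d) * bstar) (by nlinarith)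
      simp only [hη]; linarith
    have hηle : η ≤ 1 := by
      have := hm_ge ((1 + d) * bstar); simp only [hη]; linarith
    have hdecay : ∀ n : ℕ, b (t1 + n) ≤ b t1 * (1 - d * η) ^ n := by
      intro n
      induction n with
      | zero => simp
      | succ k ih =>
        have hub : (1 + d) * bstar < b (t1 + k) := hcon (t1 + k) (Nat.le_add_right _ _)
        have hmk : m (b (t1 + k)) ≤ -η := by
          have := hm_anti ((1 + d) * bstar) (b (t1 + k)) hub.le
          simp only [hη] at this ⊢; linarith
        have h1 : b (t1 + k) * (1 + d * m (b (t1 + k))) ≤ b (t1 + k) * (1 - d * η) := by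
          apply mul_le_mul_of_nonneg_left _ (hbpos _).le
          nlinarith
        have h2 : b (t1 + k) * (1 - d * η) ≤ b t1 * (1 - d * η) ^ k * (1 - d * η) := by
          apply mul_le_mul_of_nonneg_right ih
          nlinarith
        calc b (t1 + (k + 1)) = b ((t1 + k) + 1) := by ring_nf
          _ = b (t1 + k) * (1 + d * m (b (t1 + k))) := by rw [hbrec, hg']
          _ ≤ b t1 * (1 - d * η) ^ k * (1 - d * η) := le_trans h1 h2
          _ = b t1 * (1 - d * η) ^ (k + 1) := by ring
    obtain ⟨n, hn⟩ := exists_pow_lt_of_lt_one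
      (show (0:ℝ) < (1 + d) * bstar / b t1 from div_pos (by nlinarith) (hbpos t1))
      (show 1 - d * η < 1 by nlinarith)
    have hlt : b t1 * (1 - d * η) ^ n < (1 + d) * bstar := by
      rw [lt_div_iff₀ (hbpos t1)] at hn; nlinarith
    exact absurd (hcon (t1 + n) (Nat.le_add_right _ _))
      (not_lt.mpr (le_trans (hdecay n) hlt.le))
  obtain ⟨t2, ht12, ht2⟩ := step3
  -- Step 4: upper bound persists from t2 on
  have step4 : ∀ t, t2 ≤ t → b t ≤ (1 + d) * bstar := by
    intro t ht
    induction t, ht using Nat.le_induction with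
    | base => exact ht2
    | succ n hn ih => rw [hbrec]; exact inv_ub _ (hbpos n) ih
  exact ⟨t2, fun t ht => ⟨step2 t (le_trans ht12 ht), step4 t ht⟩⟩
end

section
/- Let 0 < L < U and let F : ℝ → [0,1] be continuous with F(x) = 0 for x ≤ L, F(x) = 1 for x ≥ U, and F strictly increasing on [L,U]; let b* be the unique point with F(b*) = 1/2, and let d_F := inf over all b > 0 with b ≠ b* of ((b*/b)² − 1)/(1 − 2F(b)). Then d_F ≤ 1 − (b*/U)² < 1, and for every d ∈ (0, d_F], setting g(b) := b·(1 + d·(1 − 2F(b))), the function Φ(x) := (ln x − ln b*)² satisfies Φ(g(b)) ≤ Φ(b) for every b > 0; moreover the inequality is strict whenever b ≠ b* and d·(1 − 2F(b)) ≠ (b*/b)² − 1. -/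
set_option maxHeartbeats 1000000 in
/-- Lyapunov decrease step in the proof of Theorem 3.7: with
`d_F = inf_{b > 0, b ≠ b*} ((b*/b)² − 1)/(1 − 2F(b))` one has `d_F ≤ 1 − (b*/U)² < 1`, and for
every `d ∈ (0, d_F]` the potential `Φ(x) = (ln x − ln b*)²` satisfies `Φ(g(b)) ≤ Φ(b)` for all
`b > 0` where `g(b) = b·(1 + d·(1 − 2F(b)))`, with strict inequality whenever `b ≠ b*` and
`d·(1 − 2F(b)) ≠ (b*/b)² − 1`. -/
theorem base_fee_lyapunov_decrease
    (L U : ℝ) (hL : 0 < L) (hLU : L < U)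
    (F : ℝ → ℝ) (hFcont : Continuous F)
    (hFlow : ∀ x ≤ L, F x = 0) (hFhigh : ∀ x, U ≤ x → F x = 1)
    (hFmono : StrictMonoOn F (Set.Icc L U))
    (bstar : ℝ) (hbstar : F bstar = 1 / 2)
    (dF : ℝ)
    (hdF : dF = sInf {r : ℝ | ∃ b : ℝ, 0 < b ∧ b ≠ bstar ∧
      r = ((bstar / b) ^ 2 - 1) / (1 - 2 * F b)}) :
    dF ≤ 1 - (bstar / U) ^ 2 ∧ 1 - (bstar / U) ^ 2 < 1 ∧
    ∀ d : ℝ, 0 < d → d ≤ dF →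
      ∀ g : ℝ → ℝ, (∀ x, g x = x * (1 + d * (1 - 2 * F x))) →
      ∀ Φ : ℝ → ℝ, (∀ x, Φ x = (Real.log x - Real.log bstar) ^ 2) →
      ∀ b : ℝ, 0 < b →
        (Φ (g b) ≤ Φ b ∧
          (b ≠ bstar → d * (1 - 2 * F b) ≠ (bstar / b) ^ 2 - 1 → Φ (g b) < Φ b)) := by
  have hbstarU : bstar < U := by
    by_contra h
    push_neg at h
    have h2 := hFhigh bstar h
    rw [hbstar] at h2; norm_num at h2
  have hLbstar : L < bstar := by
    by_contra h
    push_neg at h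
    have h2 := hFlow bstar h
    rw [hbstar] at h2; norm_num at h2
  have hbstar0 : 0 < bstar := hL.trans hLbstar
  have hU0 : 0 < U := hL.trans hLU
  have hF01 : ∀ x, 0 ≤ F x ∧ F x ≤ 1 := by
    intro x
    rcases le_or_gt x L with h | h
    · rw [hFlow x h]; norm_num
    rcases le_or_gt U x with h2 | h2
    · rw [hFhigh x h2]; norm_num
    · have hx : x ∈ Set.Icc L U := ⟨h.le, h2.le⟩
      have h1 := hFmono.monotoneOn ⟨le_refl L, hLU.le⟩ hx h.le
      have h2' := hFmono.monotoneOn hx ⟨hLU.le, le_refl U⟩ h2.le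
      rw [hFlow L le_rfl] at h1
      rw [hFhigh U le_rfl] at h2'
      exact ⟨h1, h2'⟩
  have hFlt : ∀ b : ℝ, b < bstar → F b < 1 / 2 := by
    intro b hlt
    rcases le_or_gt b L with h | h
    · rw [hFlow b h]; norm_num
    · have h2 := hFmono ⟨h.le, (hlt.trans hbstarU).le⟩ ⟨hLbstar.le, hbstarU.le⟩ hlt
      rwa [hbstar] at h2
  have hFgt : ∀ b : ℝ, bstar < b → 1 / 2 < F b := by
    intro b hlt
    rcases le_or_gt U b with h | h
    · rw [hFhigh b h]; norm_num
    · have h2 := hFmono ⟨hLbstar.le, hbstarU.le⟩ ⟨(hLbstar.trans hlt).le, h.le⟩ hlt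
      rwa [hbstar] at h2
  set S := {r : ℝ | ∃ b : ℝ, 0 < b ∧ b ≠ bstar ∧
      r = ((bstar / b) ^ 2 - 1) / (1 - 2 * F b)} with hS
  have hpos : ∀ r ∈ S, 0 < r := by
    rintro r ⟨b, hb, hbne, rfl⟩
    rcases lt_or_gt_of_ne hbne with h | h
    · have hF := hFlt b h
      have hc : 0 < 1 - 2 * F b := by linarith
      have hq : 0 < (bstar / b) ^ 2 - 1 := by
        have h1 : 1 < bstar / b := (one_lt_div hb).mpr h
        nlinarith
      exact div_pos hq hc
    · have hF := hFgt b h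
      have hc : 1 - 2 * F b < 0 := by linarith
      have hq : (bstar / b) ^ 2 - 1 < 0 := by
        have h1 : bstar / b < 1 := (div_lt_one hb).mpr h
        have h0 : 0 < bstar / b := div_pos hbstar0 hb
        nlinarith
      exact div_pos_of_neg_of_neg hq hc
  have hbdd : BddBelow S := ⟨0, fun r hr => (hpos r hr).le⟩
  have hUel : (1 - (bstar / U) ^ 2) ∈ S := by
    refine ⟨U, hU0, (ne_of_gt hbstarU), ?_⟩
    rw [hFhigh U le_rfl]
    norm_num
    rw [div_neg, div_one]
    ring
  have hdFle : dF ≤ 1 - (bstar / U) ^ 2 := hdF ▸ csInf_le hbdd hUel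
  have hlt1 : 1 - (bstar / U) ^ 2 < 1 := by
    have : 0 < (bstar / U) ^ 2 := by positivity
    linarith
  refine ⟨hdFle, hlt1, ?_⟩
  intro d hd hddF g hg Φ hΦ b hb
  have hdlt1 : d < 1 := lt_of_le_of_lt (hddF.trans hdFle) hlt1
  have hFb := hF01 b
  set t := d * (1 - 2 * F b) with ht
  have h1pt : 0 < 1 + t := by nlinarith [hFb.1, hFb.2]
  have hgb : g b = b * (1 + t) := by rw [hg b]
  have hlogg : Real.log (g b) = Real.log b + Real.log (1 + t) := by
    rw [hgb, Real.log_mul (ne_of_gt hb) (ne_of_gt h1pt)]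
  have hΦdiff : Φ (g b) - Φ b =
      Real.log (1 + t) * (Real.log (1 + t) + 2 * (Real.log b - Real.log bstar)) := by
    rw [hΦ, hΦ, hlogg]; ring
  rcases eq_or_ne b bstar with rfl | hne
  · have ht0 : t = 0 := by rw [ht, hbstar]; ring
    constructor
    · apply le_of_eq; rw [hgb, ht0]; norm_num
    · intro h; exact absurd rfl h
  · have hr : ((bstar / b) ^ 2 - 1) / (1 - 2 * F b) ∈ S := ⟨b, hb, hne, rfl⟩
    have hd_r : d ≤ ((bstar / b) ^ 2 - 1) / (1 - 2 * F b) :=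
      hddF.trans (hdF ▸ csInf_le hbdd hr)
    rcases lt_or_gt_of_ne hne with h | h
    · -- b < bstar
      have hF := hFlt b h
      have hc : 0 < 1 - 2 * F b := by linarith
      have hlet : t ≤ (bstar / b) ^ 2 - 1 := by
        have := mul_le_mul_of_nonneg_right hd_r hc.le
        rwa [div_mul_cancel₀ _ (ne_of_gt hc)] at this
      have hA : 0 < Real.log (1 + t) := Real.log_pos (by nlinarith [mul_pos hd hc])
      have hbb : (bstar / b) ^ 2 * b ^ 2 = bstar ^ 2 := by field_simp
      have hkey : ∀ s : ℝ, s ≤ (bstar / b) ^ 2 - 1 → (1 + s) * b ^ 2 ≤ bstar ^ 2 := by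
        intro s hs
        have h2 := mul_le_mul_of_nonneg_right hs (sq_nonneg b)
        nlinarith [h2, hbb]
      have hexp : ∀ s : ℝ, 0 < 1 + s →
          Real.log ((1 + s) * b ^ 2) = Real.log (1 + s) + 2 * Real.log b := by
        intro s hs
        rw [Real.log_mul (ne_of_gt hs) (by positivity), Real.log_pow]; push_cast; ring
      have hAB : Real.log (1 + t) + 2 * (Real.log b - Real.log bstar) ≤ 0 := by
        have hlog := Real.log_le_log (by positivity) (hkey t hlet)
        rw [hexp t h1pt, Real.log_pow] at hlog
        push_cast at hlog; linarith
      constructor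
      · linarith [mul_nonpos_of_nonneg_of_nonpos hA.le hAB]
      · intro _ hne2
        have hlt : t < (bstar / b) ^ 2 - 1 := lt_of_le_of_ne hlet hne2
        have h1 : (1 + t) * b ^ 2 < bstar ^ 2 := by
          have h2 := mul_lt_mul_of_pos_right hlt (pow_pos hb 2)
          nlinarith [h2, hbb]
        have hlog := Real.log_lt_log (by positivity) h1
        rw [hexp t h1pt, Real.log_pow] at hlog
        push_cast at hlog
        have hAB' : Real.log (1 + t) + 2 * (Real.log b - Real.log bstar) < 0 := by linarith
        linarith [mul_neg_of_pos_of_neg hA hAB']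
    · -- bstar < b
      have hF := hFgt b h
      have hc : 1 - 2 * F b < 0 := by linarith
      have hget : (bstar / b) ^ 2 - 1 ≤ t := by
        have := mul_le_mul_of_nonpos_right hd_r hc.le
        rwa [div_mul_cancel₀ _ (ne_of_lt hc)] at this
      have ht0 : t < 0 := mul_neg_of_pos_of_neg hd hc
      have hA : Real.log (1 + t) < 0 := Real.log_neg h1pt (by linarith)
      have hexp : ∀ s : ℝ, 0 < 1 + s →
          Real.log ((1 + s) * b ^ 2) = Real.log (1 + s) + 2 * Real.log b := by
        intro s hs
        rw [Real.log_mul (ne_of_gt hs) (by positivity), Real.log_pow]; push_cast; ring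
      have hbb : (bstar / b) ^ 2 * b ^ 2 = bstar ^ 2 := by field_simp
      have hAB : 0 ≤ Real.log (1 + t) + 2 * (Real.log b - Real.log bstar) := by
        have h1 : bstar ^ 2 ≤ (1 + t) * b ^ 2 := by
          have h2 := mul_le_mul_of_nonneg_right hget (sq_nonneg b)
          nlinarith [h2, hbb]
        have hlog := Real.log_le_log (by positivity) h1
        rw [hexp t h1pt, Real.log_pow] at hlog
        push_cast at hlog; linarith
      constructor
      · linarith [mul_nonpos_of_nonpos_of_nonneg hA.le hAB]
      · intro _ hne2
        have hlt : (bstar / b) ^ 2 - 1 < t := lt_of_le_of_ne hget (Ne.symm hne2)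
        have h1 : bstar ^ 2 < (1 + t) * b ^ 2 := by
          have h2 := mul_lt_mul_of_pos_right hlt (pow_pos hb 2)
          nlinarith [h2, hbb]
        have hlog := Real.log_lt_log (by positivity) h1
        rw [hexp t h1pt, Real.log_pow] at hlog
        push_cast at hlog
        have hAB' : 0 < Real.log (1 + t) + 2 * (Real.log b - Real.log bstar) := by linarith
        linarith [mul_neg_of_neg_of_pos hA hAB']
end

section
/- Let F : ℝ → [0,1] be defined by F(b) = 0 for b ≤ 0, F(b) = b for 0 ≤ b ≤ 1, and F(b) = 1 for b ≥ 1 (the Uniform[0,1] cumulative distribution function), so that b* = 1/2 is the unique point with F(b*) = 1/2. Then the infimum over all b > 0 with b ≠ 1/2 of ((1/(2b))² − 1)/(1 − 2F(b)) equals 3/4, and it is attained at b = 1. -/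
lemma uniform01_lb (b : ℝ) (hb : 0 < b) (hne : b ≠ 1 / 2) :
    (3 : ℝ) / 4 ≤ ((1 / (2 * b)) ^ 2 - 1) / (1 - 2 * max 0 (min b 1)) := by
  rcases le_or_gt b 1 with h1 | h1
  · have hmax : max 0 (min b 1) = b := by
      rw [min_eq_left h1, max_eq_right hb.le]
    rw [hmax]
    have hd : (1 : ℝ) - 2 * b ≠ 0 := by
      intro h; apply hne; linarith
    have heq : ((1 / (2 * b)) ^ 2 - 1) / (1 - 2 * b) = (1 + 2 * b) / (4 * b ^ 2) := by
      field_simp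
      ring
    rw [heq, le_div_iff₀ (by positivity)]
    nlinarith [sq_nonneg (b - 1), mul_pos hb hb]
  · have hmax : max 0 (min b 1) = 1 := by
      rw [min_eq_right h1.le]; norm_num
    rw [hmax]
    have heq : ((1 / (2 * b)) ^ 2 - 1) / (1 - 2 * 1) = (4 * b ^ 2 - 1) / (4 * b ^ 2) := by
      field_simp
      ring
    rw [heq, le_div_iff₀ (by positivity)]
    nlinarith

/-- **Example 3.8, uniform on [0,1].** For the Uniform[0,1] CDF
`F(b) = max 0 (min b 1)` (so `b* = 1/2`), the infimum over `b > 0`, `b ≠ 1/2` of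
`((1/(2b))² − 1)/(1 − 2F(b))` equals `3/4`, and it is attained at `b = 1`. -/
theorem uniform01_threshold
    (F : ℝ → ℝ) (hF : ∀ b, F b = max 0 (min b 1)) :
    sInf {r : ℝ | ∃ b : ℝ, 0 < b ∧ b ≠ 1 / 2 ∧
        r = ((1 / (2 * b)) ^ 2 - 1) / (1 - 2 * F b)} = 3 / 4 ∧
      ((1 / (2 * (1 : ℝ))) ^ 2 - 1) / (1 - 2 * F 1) = 3 / 4 := by
  have hF1 : F 1 = 1 := by rw [hF]; norm_num
  have hval : ((1 / (2 * (1 : ℝ))) ^ 2 - 1) / (1 - 2 * F 1) = 3 / 4 := by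
    rw [hF1]; norm_num
  refine ⟨le_antisymm ?_ ?_, hval⟩
  · apply csInf_le
    · refine ⟨3 / 4, ?_⟩
      rintro r ⟨b, hb, hbne, rfl⟩
      rw [hF b]
      exact uniform01_lb b hb hbne
    · exact ⟨1, one_pos, by norm_num, hval.symm⟩
  · refine le_csInf ⟨_, 1, one_pos, by norm_num, rfl⟩ ?_
    rintro r ⟨b, hb, hbne, rfl⟩
    rw [hF b]
    exact uniform01_lb b hb hbne
end

section
/- Let 0 < w < 2 and let F : ℝ → [0,1] be the Uniform[1 − w/2, 1 + w/2] cumulative distribution function, i.e. F(b) = 0 for b ≤ 1 − w/2, F(b) = (b − 1 + w/2)/w for 1 − w/2 ≤ b ≤ 1 + w/2, and F(b) = 1 for b ≥ 1 + w/2, so that b* = 1 is the unique point with F(b*) = 1/2. Then the infimum over all b > 0 with b ≠ 1 of ((1/b)² − 1)/(1 − 2F(b)) equals w(4 + w)/(2 + w)², and it is attained at b = 1 + w/2. In particular, this threshold is strictly increasing in w on (0,2). -/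
set_option maxHeartbeats 1600000 in
/-- **Example 3.8, parametric uniform.** For `0 < w < 2` and the
Uniform[1 − w/2, 1 + w/2] CDF `F(b) = max 0 (min ((b − 1 + w/2)/w) 1)` (so `b* = 1`), the
infimum over `b > 0`, `b ≠ 1` of `((1/b)² − 1)/(1 − 2F(b))` equals `w(4 + w)/(2 + w)²`, it is
attained at `b = 1 + w/2`, and this threshold is strictly increasing in `w` on `(0,2)`. -/
theorem uniform_parametric_threshold
    (w : ℝ) (hw0 : 0 < w) (hw2 : w < 2)
    (F : ℝ → ℝ) (hF : ∀ b, F b = max 0 (min ((b - 1 + w / 2) / w) 1)) :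
    sInf {r : ℝ | ∃ b : ℝ, 0 < b ∧ b ≠ 1 ∧
        r = ((1 / b) ^ 2 - 1) / (1 - 2 * F b)} = w * (4 + w) / (2 + w) ^ 2 ∧
      ((1 / (1 + w / 2)) ^ 2 - 1) / (1 - 2 * F (1 + w / 2)) = w * (4 + w) / (2 + w) ^ 2 ∧
      StrictMonoOn (fun v : ℝ => v * (4 + v) / (2 + v) ^ 2) (Set.Ioo 0 2) := by
  have h2w : (0:ℝ) < 2 + w := by linarith
  have h2wsq : (0:ℝ) < (2 + w) ^ 2 := by positivity
  have hbstar : (0:ℝ) < 1 + w / 2 := by linarith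
  have hwne : w ≠ 0 := ne_of_gt hw0
  -- F at the upper endpoint is 1
  have hF1 : F (1 + w / 2) = 1 := by
    rw [hF]
    have h1 : (1 + w / 2 - 1 + w / 2) / w = 1 := by field_simp; ring
    rw [h1]
    norm_num
  -- attained value
  have hattain : ((1 / (1 + w / 2)) ^ 2 - 1) / (1 - 2 * F (1 + w / 2))
      = w * (4 + w) / (2 + w) ^ 2 := by
    rw [hF1]
    have hne : (1 + w / 2) ≠ 0 := ne_of_gt hbstar
    have hne2 : (2 + w) ≠ 0 := ne_of_gt h2w
    field_simp
    ring
  -- the lower bound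
  have hlb : ∀ r ∈ {r : ℝ | ∃ b : ℝ, 0 < b ∧ b ≠ 1 ∧
      r = ((1 / b) ^ 2 - 1) / (1 - 2 * F b)}, w * (4 + w) / (2 + w) ^ 2 ≤ r := by
    rintro r ⟨b, hb0, hb1, rfl⟩
    have hb2 : (0:ℝ) < b ^ 2 := by positivity
    by_cases hle : b ≤ 1 - w / 2
    · -- F b = 0
      have hval : (b - 1 + w / 2) / w ≤ 0 := by
        apply div_nonpos_of_nonpos_of_nonneg <;> linarith
      have hFb : F b = 0 := by
        rw [hF, max_eq_left (le_trans (min_le_left _ _) hval)]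
      rw [hFb, show (1 - 2 * (0:ℝ)) = 1 by norm_num, div_one]
      have hbb : b ^ 2 ≤ (1 - w / 2) ^ 2 := by nlinarith
      have key : (w * (4 + w) / (2 + w) ^ 2 + 1) * b ^ 2 ≤ 1 := by
        rw [div_add' _ _ _ (ne_of_gt h2wsq), div_mul_eq_mul_div, div_le_one h2wsq]
        have hw4 : w ^ 2 < 4 := by nlinarith
        have h12 : (0:ℝ) ≤ w ^ 2 * (12 - w ^ 2) :=
          mul_nonneg (sq_nonneg w) (by linarith)
        nlinarith [mul_le_mul_of_nonneg_left hbb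
            (show (0:ℝ) ≤ w * (4 + w) + (2 + w) ^ 2 by nlinarith), h12]
      rw [div_pow, one_pow, le_sub_iff_add_le, le_div_iff₀ hb2]
      exact key
    · by_cases hge : 1 + w / 2 ≤ b
      · -- F b = 1
        have hval : (1:ℝ) ≤ (b - 1 + w / 2) / w := by
          rw [le_div_iff₀ hw0]; linarith
        have hFb : F b = 1 := by
          rw [hF, min_eq_right hval]
          norm_num
        rw [hFb]
        have hd : ((1 / b) ^ 2 - 1) / (1 - 2 * 1) = 1 - (1 / b) ^ 2 := by ring
        rw [hd]
        have hbb : (1 + w / 2) ^ 2 ≤ b ^ 2 := by nlinarith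
        have h1 : 1 / b ^ 2 ≤ 1 / (1 + w / 2) ^ 2 :=
          one_div_le_one_div_of_le (by positivity) hbb
        have h2 : 1 - 1 / (1 + w / 2) ^ 2 = w * (4 + w) / (2 + w) ^ 2 := by
          field_simp
          ring
        have h3 : (1 / b) ^ 2 = 1 / b ^ 2 := by rw [div_pow, one_pow]
        linarith
      · -- interior case
        push_neg at hle hge
        have hval0 : (0:ℝ) ≤ (b - 1 + w / 2) / w :=
          div_nonneg (by linarith) hw0.le
        have hval1 : (b - 1 + w / 2) / w ≤ 1 := by
          rw [div_le_one hw0]; linarith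
        have hFb : F b = (b - 1 + w / 2) / w := by
          rw [hF, min_eq_left hval1, max_eq_right hval0]
        rw [hFb]
        have h1b : (1:ℝ) - b ≠ 0 := sub_ne_zero.mpr (Ne.symm hb1)
        have heq : ((1 / b) ^ 2 - 1) / (1 - 2 * ((b - 1 + w / 2) / w))
            = (1 + b) * w / (2 * b ^ 2) := by
          have hden : 1 - 2 * ((b - 1 + w / 2) / w) = 2 * (1 - b) / w := by
            field_simp; ring
          rw [hden]
          field_simp
          ring
        rw [heq, div_le_div_iff₀ h2wsq (by positivity)]
        nlinarith [mul_pos hw0 (mul_pos (show (0:ℝ) < 1 + w / 2 - b by linarith) hb0),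
          mul_pos hw0 hb0, mul_pos hw0 hw0, sq_nonneg (b - 1)]
  refine ⟨?_, hattain, ?_⟩
  · apply le_antisymm
    · exact csInf_le ⟨_, hlb⟩ ⟨1 + w / 2, hbstar, by intro h; nlinarith [h], hattain.symm⟩
    · exact le_csInf ⟨_, 1 + w / 2, hbstar, by intro h; nlinarith [h], hattain.symm⟩ hlb
  · intro a ha b hb hab
    obtain ⟨ha1, -⟩ := ha
    obtain ⟨hb1', -⟩ := hb
    show a * (4 + a) / (2 + a) ^ 2 < b * (4 + b) / (2 + b) ^ 2
    have ha2 : (0:ℝ) < (2 + a) ^ 2 := by nlinarith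
    have hb2 : (0:ℝ) < (2 + b) ^ 2 := by nlinarith
    rw [div_lt_div_iff₀ ha2 hb2]
    have h4 : (0:ℝ) < 4 + a + b := by linarith
    have pos : 0 < (b - a) * (4 + a + b) := mul_pos (sub_pos.mpr hab) h4
    nlinarith [pos]
end

section
/- Let F : ℝ → [0,1] be defined by F(b) = 0 for b ≤ 0, F(b) = b for 0 ≤ b ≤ 1, and F(b) = 1 for b ≥ 1. Then for every d ∈ (0, 3/4] and every initial condition b_0 > 0, the sequence defined by b_{t+1} = b_t·(1 + d·(1 − 2F(b_t))) converges to 1/2. -/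
/-- **Theorem 3.7 + Example 3.8.** For the Uniform[0,1] CDF
`F(b) = max 0 (min b 1)`, for every step size `d ∈ (0, 3/4]` and every initial condition
`b_0 > 0`, the sequence `b_{t+1} = b_t·(1 + d·(1 − 2F(b_t)))` converges to `1/2`. -/
theorem uniform01_convergence
    (F : ℝ → ℝ) (hF : ∀ b, F b = max 0 (min b 1))
    (d : ℝ) (hd0 : 0 < d) (hd : d ≤ 3 / 4)
    (b : ℕ → ℝ) (hb0 : 0 < b 0)
    (hbrec : ∀ t, b (t + 1) = b t * (1 + d * (1 - 2 * F (b t)))) :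
    Filter.Tendsto b Filter.atTop (nhds (1 / 2)) := by
  have hFle : ∀ x : ℝ, 0 ≤ x → x ≤ 1 → F x = x := by
    intro x hx hx1
    rw [hF, min_eq_left hx1, max_eq_right hx]
  have hFge : ∀ x : ℝ, 1 ≤ x → F x = 1 := by
    intro x hx
    rw [hF, min_eq_right hx]; norm_num
  have hFub : ∀ x : ℝ, F x ≤ 1 := by
    intro x
    rw [hF]; exact max_le (by norm_num) (min_le_right _ _)
  -- positivity
  have hpos : ∀ t, 0 < b t := by
    intro t
    induction t with
    | zero => exact hb0
    | succ n ih =>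
      rw [hbrec]
      apply mul_pos ih
      have h1 : F (b n) ≤ 1 := hFub (b n)
      nlinarith
  -- the orbit eventually reaches (0, 1]
  have hT1 : ∃ T, b T ≤ 1 := by
    by_contra h
    push_neg at h
    have hgeom : ∀ t, b t = b 0 * (1 - d) ^ t := by
      intro t
      induction t with
      | zero => simp
      | succ n ih =>
        rw [hbrec, hFge (b n) (h n).le, ih]; ring
    obtain ⟨n, hn⟩ := exists_pow_lt_of_lt_one (show (0:ℝ) < 1 / b 0 by positivity)
      (show 1 - d < 1 by linarith)
    have h1 := h n
    rw [hgeom n] at h1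
    have hlt : (1 - d) ^ n * b 0 < 1 := (lt_div_iff₀ hb0).mp hn
    nlinarith
  -- the orbit eventually reaches (0, 1)
  have hT : ∃ T, b T < 1 := by
    obtain ⟨T0, hT0⟩ := hT1
    rcases lt_or_eq_of_le hT0 with h | h
    · exact ⟨T0, h⟩
    · refine ⟨T0 + 1, ?_⟩
      rw [hbrec, hFge (b T0) (le_of_eq h.symm), h]
      nlinarith
  obtain ⟨T, hTlt⟩ := hT
  set ε : ℝ := |b T - 1/2| with hεdef
  have hε0 : 0 ≤ ε := abs_nonneg _
  have hεlt : ε < 1/2 := by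
    rw [hεdef]
    rw [abs_lt]
    constructor
    · linarith [hpos T]
    · linarith
  set q : ℝ := max (1 - d + 2*d*ε) (1/2) with hqdef
  have hq0 : 0 ≤ q := le_trans (by norm_num) (le_max_right _ _)
  have hq1 : q < 1 := by
    apply max_lt
    · have := mul_lt_mul_of_pos_left hεlt hd0
      linarith
    · norm_num
  have key : ∀ n, |b (T + n) - 1/2| ≤ ε * q ^ n := by
    intro n
    induction n with
    | zero =>
      simp only [Nat.add_zero, pow_zero, mul_one]
      exact hεdef.ge
    | succ n ih =>
      have hqn1 : q ^ n ≤ 1 := pow_le_one₀ hq0 hq1.le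
      have hεq : ε * q ^ n ≤ ε := by nlinarith
      have hxε : |b (T + n) - 1/2| ≤ ε := le_trans ih hεq
      have hxlb : 1/2 - ε ≤ b (T + n) := by
        have h := abs_le.mp hxε; linarith [h.1]
      have hxub : b (T + n) ≤ 1/2 + ε := by
        have h := abs_le.mp hxε; linarith [h.2]
      have hx0 : (0:ℝ) ≤ b (T + n) := by linarith
      have hx1 : b (T + n) ≤ 1 := by linarith
      have hFx : F (b (T + n)) = b (T + n) := hFle _ hx0 hx1
      have hrec : b (T + (n+1)) = b (T + n) * (1 + d * (1 - 2 * b (T + n))) := by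
        have h := hbrec (T + n)
        rw [hFx] at h
        exact h
      have hfac : b (T + (n+1)) - 1/2 = (b (T + n) - 1/2) * (1 - 2*d*(b (T + n))) := by
        rw [hrec]; ring
      rw [hfac, abs_mul]
      have habs : |1 - 2*d*(b (T + n))| ≤ q := by
        rw [abs_le]
        constructor
        · have h1 : d * b (T + n) ≤ d * 1 := mul_le_mul_of_nonneg_left hx1 hd0.le
          have h2 : (1:ℝ)/2 ≤ q := le_max_right _ _
          linarith
        · have h1 : d * (1/2 - ε) ≤ d * b (T + n) := mul_le_mul_of_nonneg_left hxlb hd0.le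
          have h2 : 1 - d + 2*d*ε ≤ q := le_max_left _ _
          linarith
      calc |b (T + n) - 1/2| * |1 - 2*d*(b (T + n))| ≤ (ε * q ^ n) * q :=
            mul_le_mul ih habs (abs_nonneg _) (by positivity)
        _ = ε * q ^ (n+1) := by ring
  have h1 : Filter.Tendsto (fun n => ε * q ^ n) Filter.atTop (nhds 0) := by
    simpa using (tendsto_pow_atTop_nhds_zero_of_lt_one hq0 hq1).const_mul ε
  have h2 : Filter.Tendsto (fun n => b (T + n) - 1/2) Filter.atTop (nhds 0) :=
    squeeze_zero_norm (fun n => by simpa using key n) h1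
  have h3 : Filter.Tendsto (fun n => b (T + n)) Filter.atTop (nhds (1/2)) := by
    have h := h2.add_const (1/2)
    simpa using h
  have h4 : Filter.Tendsto (fun n => b (n + T)) Filter.atTop (nhds (1/2)) := by
    simpa [Nat.add_comm] using h3
  exact (Filter.tendsto_add_atTop_iff_nat T).mp h4
end

section
/- For every step size d ∈ (0,1) there exist μ > 1/2 and b_0 > 0 such that, letting F : ℝ → [0,1] be the Uniform[μ − 1/2, μ + 1/2] cumulative distribution function (F(b) = 0 for b ≤ μ − 1/2, F(b) = b − μ + 1/2 for μ − 1/2 ≤ b ≤ μ + 1/2, F(b) = 1 for b ≥ μ + 1/2) and g(b) := b·(1 + d·(1 − 2F(b))), the iterates satisfy g³(b_0) ≤ b_0 < g(b_0) < g²(b_0). -/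
/-- **Theorem 3.12.** For every step size `d ∈ (0,1)` there exist `μ > 1/2` and
`b_0 > 0` such that, for the Uniform[μ − 1/2, μ + 1/2] CDF
`F(b) = max 0 (min (b − μ + 1/2) 1)` and the base fee map `g(b) = b·(1 + d·(1 − 2F(b)))`, the
iterates satisfy `g³(b_0) ≤ b_0 < g(b_0) < g²(b_0)`. -/
theorem exists_period_orbit_condition
    (d : ℝ) (hd0 : 0 < d) (hd1 : d < 1) :
    ∃ μ : ℝ, 1 / 2 < μ ∧ ∃ b₀ : ℝ, 0 < b₀ ∧
      ∀ F g : ℝ → ℝ,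
        (∀ b, F b = max 0 (min (b - μ + 1 / 2) 1)) →
        (∀ b, g b = b * (1 + d * (1 - 2 * F b))) →
        g (g (g b₀)) ≤ b₀ ∧ b₀ < g b₀ ∧ g b₀ < g (g b₀) := by
  have hd2 : (0:ℝ) < d ^ 2 := by positivity
  set μ : ℝ := 8 / d ^ 2 with hμ
  have hμbig : (8:ℝ) < μ := by
    rw [hμ]
    rw [lt_div_iff₀ hd2]
    nlinarith
  have h1d : (0:ℝ) < 1 + d := by linarith
  set b₀ : ℝ := (μ - d / 4) / (1 + d) with hb₀
  have hμt : (0:ℝ) < μ - d / 4 := by nlinarith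
  have hb₀pos : 0 < b₀ := div_pos hμt h1d
  refine ⟨μ, by nlinarith, b₀, hb₀pos, ?_⟩
  intro F g hF hg
  -- g b₀ = μ - d/4
  have hb₀mul : b₀ * (1 + d) = μ - d / 4 := div_mul_cancel₀ _ (ne_of_gt h1d)
  have hdμ : d * μ = 8 / d := by
    rw [hμ]; field_simp
  have hdμ8 : 8 < d * μ := by
    rw [hdμ]
    rw [lt_div_iff₀ hd0]
    nlinarith
  have hb₀le : b₀ - μ + 1 / 2 ≤ 0 := by
    rw [hb₀]
    rw [div_sub' (ne_of_gt h1d), div_add' _ _ _ (ne_of_gt h1d)]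
    apply div_nonpos_of_nonpos_of_nonneg _ (le_of_lt h1d)
    nlinarith
  have hFb₀ : F b₀ = 0 := by
    rw [hF]
    rw [min_eq_left (by linarith), max_eq_left hb₀le]
  have hg1 : g b₀ = μ - d / 4 := by
    rw [hg, hFb₀]
    rw [← hb₀mul]; ring
  -- F (μ - d/4) = 1/2 - d/4
  have hF1 : F (μ - d / 4) = 1 / 2 - d / 4 := by
    rw [hF]
    rw [min_eq_left (by linarith), max_eq_right (by linarith)]
    ring
  have hg2 : g (g b₀) = (μ - d / 4) * (1 + d ^ 2 / 2) := by
    rw [hg1, hg, hF1]; ring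
  -- g2 is past the upper end of the support
  have hg2big : 1 ≤ (μ - d / 4) * (1 + d ^ 2 / 2) - μ + 1 / 2 := by
    have : d ^ 2 * μ = 8 := by rw [hμ]; field_simp
    nlinarith [sq_nonneg d, hd0.le, hd1.le]
  have hF2 : F ((μ - d / 4) * (1 + d ^ 2 / 2)) = 1 := by
    rw [hF]
    rw [min_eq_right (by linarith), max_eq_right (by norm_num)]
  have hg3 : g (g (g b₀)) = (μ - d / 4) * (1 + d ^ 2 / 2) * (1 - d) := by
    rw [hg2, hg, hF2]; ring
  refine ⟨?_, ?_, ?_⟩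
  · rw [hg3, hb₀]
    rw [le_div_iff₀ h1d]
    nlinarith [hμt, sq_nonneg d]
  · rw [hg1, ← hb₀mul]
    nlinarith [hb₀pos]
  · rw [hg1, hg, hF1]
    nlinarith [hμt, hd2]
end

section
/- Let 0 < d < 1 and let δ satisfy 0 < δ ≤ min{1/2, d/(2(1 − d²))}. Let μ ≥ max{(1 + d − δ)/(2d), (dδ² + δ + 1/2)/(dδ)}, and set b_0 := (μ − δ)/(1 + d). Let F : ℝ → [0,1] be the Uniform[μ − 1/2, μ + 1/2] cumulative distribution function and g(b) := b·(1 + d·(1 − 2F(b))). Then g(b_0) = μ − δ, g²(b_0) = (μ − δ)(1 + 2dδ), g³(b_0) = (μ − δ)(1 + 2dδ)(1 − d), and these satisfy g³(b_0) ≤ b_0 < g(b_0) < g²(b_0). -/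
/-- **construction in the proof of Theorem 3.12.** For `0 < d < 1`,
`0 < δ ≤ min{1/2, d/(2(1 − d²))}`, `μ ≥ max{(1 + d − δ)/(2d), (dδ² + δ + 1/2)/(dδ)}` and
`b_0 = (μ − δ)/(1 + d)`, the Uniform[μ − 1/2, μ + 1/2] base fee map
`g(b) = b·(1 + d·(1 − 2F(b)))` satisfies `g(b_0) = μ − δ`, `g²(b_0) = (μ − δ)(1 + 2dδ)`,
`g³(b_0) = (μ − δ)(1 + 2dδ)(1 − d)`, and `g³(b_0) ≤ b_0 < g(b_0) < g²(b_0)`. -/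
theorem period_orbit_construction
    (d δ μ b₀ : ℝ) (hd0 : 0 < d) (hd1 : d < 1)
    (hδ0 : 0 < δ) (hδ : δ ≤ min (1 / 2) (d / (2 * (1 - d ^ 2))))
    (hμ : μ ≥ max ((1 + d - δ) / (2 * d)) ((d * δ ^ 2 + δ + 1 / 2) / (d * δ)))
    (hb₀ : b₀ = (μ - δ) / (1 + d))
    (F g : ℝ → ℝ)
    (hF : ∀ b, F b = max 0 (min (b - μ + 1 / 2) 1))
    (hg : ∀ b, g b = b * (1 + d * (1 - 2 * F b))) :
    g b₀ = μ - δ ∧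
    g (g b₀) = (μ - δ) * (1 + 2 * d * δ) ∧
    g (g (g b₀)) = (μ - δ) * (1 + 2 * d * δ) * (1 - d) ∧
    g (g (g b₀)) ≤ b₀ ∧ b₀ < g b₀ ∧ g b₀ < g (g b₀) := by
  have hδ1 : δ ≤ 1 / 2 := le_trans hδ (min_le_left _ _)
  have hδ2 : δ ≤ d / (2 * (1 - d ^ 2)) := le_trans hδ (min_le_right _ _)
  have hμ1 : (1 + d - δ) / (2 * d) ≤ μ := le_trans (le_max_left _ _) hμ
  have hμ2 : (d * δ ^ 2 + δ + 1 / 2) / (d * δ) ≤ μ := le_trans (le_max_right _ _) hμ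
  have hd2 : (0:ℝ) < 2 * d := by linarith
  have hdδ : (0:ℝ) < d * δ := mul_pos hd0 hδ0
  have h1 : 1 + d - δ ≤ 2 * d * μ := by
    have := (div_le_iff₀ hd2).mp hμ1; linarith
  have h2 : d * δ ^ 2 + δ + 1 / 2 ≤ d * δ * μ := by
    have := (div_le_iff₀ hdδ).mp hμ2; linarith
  have hμδ : δ < μ := by nlinarith
  have h1d : (0:ℝ) < 1 + d := by linarith
  -- b₀ ≤ μ - 1/2
  have hb₀le : b₀ ≤ μ - 1 / 2 := by
    rw [hb₀, div_le_iff₀ h1d]; nlinarith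
  -- F b₀ = 0
  have hFb₀ : F b₀ = 0 := by
    rw [hF]
    have : min (b₀ - μ + 1 / 2) 1 ≤ 0 := le_trans (min_le_left _ _) (by linarith)
    exact max_eq_left this
  have hg1 : g b₀ = μ - δ := by
    rw [hg, hFb₀, hb₀]; field_simp; ring
  -- F (μ - δ) = 1/2 - δ
  have hF2 : F (μ - δ) = 1 / 2 - δ := by
    rw [hF]
    rw [min_eq_left (by linarith), max_eq_right (by linarith)]
    ring
  have hg2 : g (g b₀) = (μ - δ) * (1 + 2 * d * δ) := by
    rw [hg1, hg, hF2]; ring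
  -- second iterate ≥ μ + 1/2
  have hbig : μ + 1 / 2 ≤ (μ - δ) * (1 + 2 * d * δ) := by nlinarith
  have hF3 : F ((μ - δ) * (1 + 2 * d * δ)) = 1 := by
    rw [hF]
    rw [min_eq_right (by linarith), max_eq_right (by norm_num)]
  have hg3 : g (g (g b₀)) = (μ - δ) * (1 + 2 * d * δ) * (1 - d) := by
    rw [hg2, hg, hF3]; ring
  refine ⟨hg1, hg2, hg3, ?_, ?_, ?_⟩
  · rw [hg3, hb₀, le_div_iff₀ h1d]
    clear hμ hδ hF hg hFb₀ hF2 hF3 hg1 hg2 hg3 hb₀ hb₀le hbig hμ1 hμ2 F g b₀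
    have hd2' : (0:ℝ) < 2 * (1 - d ^ 2) := by nlinarith
    have hδd : δ * (2 * (1 - d ^ 2)) ≤ d := (le_div_iff₀ hd2').mp hδ2
    have key : 2 * d * δ * (1 - d ^ 2) ≤ d ^ 2 := by nlinarith [mul_le_mul_of_nonneg_left hδd hd0.le]
    have hμδ' : (0:ℝ) ≤ μ - δ := by linarith
    nlinarith [mul_le_mul_of_nonneg_left key hμδ']
  · rw [hg1, hb₀, div_lt_iff₀ h1d]; nlinarith
  · rw [hg2, hg1]; nlinarith
end

section
/- Let a < b < c be real numbers and let g : [a, c] → ℝ be continuous with g(a) = b, g(b) = c and g(c) ≤ a. Then there exists a point p ∈ [a, c] such that g(p) ∈ [a,c], g(g(p)) ∈ [a,c], g³(p) = p and g(p) ≠ p; i.e., g has a periodic point of period 3. -/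
/-- Covering lemma (increasing orientation): if `f u ≤ s ≤ t ≤ f v`, there is a subinterval
`[u',v'] ⊆ [u,v]` with `f u' = s`, `f v' = t` and `f` maps `[u',v']` into `[s,t]`. -/
lemma cover_lemma (f : ℝ → ℝ) (u v s t : ℝ) (huv : u ≤ v)
    (hf : ContinuousOn f (Set.Icc u v)) (h1 : f u ≤ s) (hst : s ≤ t) (h2 : t ≤ f v) :
    ∃ u' v', u ≤ u' ∧ u' ≤ v' ∧ v' ≤ v ∧ f u' = s ∧ f v' = t ∧
      Set.MapsTo f (Set.Icc u' v') (Set.Icc s t) := by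
  set T : Set ℝ := Set.Icc u v ∩ f ⁻¹' {t} with hTdef
  have hTne : T.Nonempty := by
    obtain ⟨x, hx, hfx⟩ := intermediate_value_Icc huv hf ⟨le_trans h1 hst, h2⟩
    exact ⟨x, hx, hfx⟩
  have hTclosed : IsClosed T :=
    hf.preimage_isClosed_of_isClosed isClosed_Icc isClosed_singleton
  have hTbdd : BddBelow T := (bddBelow_Icc).mono Set.inter_subset_left
  set v' := sInf T with hv'def
  have hv'mem : v' ∈ T := hTclosed.csInf_mem hTne hTbdd
  have hv'Icc : v' ∈ Set.Icc u v := hv'mem.1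
  have hfv' : f v' = t := hv'mem.2
  have hfv'min : ∀ y ∈ T, v' ≤ y := fun y hy => csInf_le hTbdd hy
  set S : Set ℝ := Set.Icc u v' ∩ f ⁻¹' {s} with hSdef
  have hfuv' : ContinuousOn f (Set.Icc u v') :=
    hf.mono (Set.Icc_subset_Icc le_rfl hv'Icc.2)
  have hSne : S.Nonempty := by
    obtain ⟨x, hx, hfx⟩ := intermediate_value_Icc hv'Icc.1 hfuv'
      (by rw [hfv']; exact ⟨h1, hst⟩)
    exact ⟨x, hx, hfx⟩
  have hSclosed : IsClosed S :=
    hfuv'.preimage_isClosed_of_isClosed isClosed_Icc isClosed_singleton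
  have hSbdd : BddAbove S := (bddAbove_Icc).mono Set.inter_subset_left
  set u' := sSup S with hu'def
  have hu'mem : u' ∈ S := hSclosed.csSup_mem hSne hSbdd
  have hu'Icc : u' ∈ Set.Icc u v' := hu'mem.1
  have hfu' : f u' = s := hu'mem.2
  have hfu'max : ∀ y ∈ S, y ≤ u' := fun y hy => le_csSup hSbdd hy
  refine ⟨u', v', hu'Icc.1, hu'Icc.2, hv'Icc.2, hfu', hfv', ?_⟩
  intro x hx
  have hxuv : x ∈ Set.Icc u v :=
    ⟨le_trans hu'Icc.1 hx.1, le_trans hx.2 hv'Icc.2⟩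
  constructor
  · by_contra hlt
    push_neg at hlt
    have hfxv : ContinuousOn f (Set.Icc x v') :=
      hf.mono (Set.Icc_subset_Icc hxuv.1 hv'Icc.2)
    obtain ⟨y, hy, hfy⟩ := intermediate_value_Icc hx.2 hfxv
      (by rw [hfv']; exact ⟨le_of_lt hlt, hst⟩)
    have hyS : y ∈ S := ⟨⟨le_trans hxuv.1 hy.1, hy.2⟩, hfy⟩
    have hyu' : y ≤ u' := hfu'max y hyS
    have hxu' : u' < x := lt_of_le_of_ne hx.1 (fun h => by
      rw [← h, hfu'] at hlt; exact lt_irrefl s hlt)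
    exact absurd (lt_of_lt_of_le hxu' hy.1) (not_lt.mpr hyu')
  · by_contra hlt
    push_neg at hlt
    have hfux : ContinuousOn f (Set.Icc u' x) :=
      hf.mono (Set.Icc_subset_Icc hu'Icc.1 hxuv.2)
    obtain ⟨y, hy, hfy⟩ := intermediate_value_Icc hx.1 hfux
      (by rw [hfu']; exact ⟨hst, le_of_lt hlt⟩)
    have hxv' : x < v' := lt_of_le_of_ne hx.2 (fun h => by
      rw [h, hfv'] at hlt; exact lt_irrefl t hlt)
    have hyT : y ∈ T := ⟨⟨le_trans hu'Icc.1 hy.1, le_trans hy.2 hxuv.2⟩, hfy⟩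
    have : v' ≤ y := hfv'min y hyT
    exact absurd (lt_of_le_of_lt hy.2 hxv') (not_lt.mpr this)

/-- Covering lemma (decreasing orientation). -/
lemma cover_lemma' (f : ℝ → ℝ) (u v s t : ℝ) (huv : u ≤ v)
    (hf : ContinuousOn f (Set.Icc u v)) (h1 : t ≤ f u) (hst : s ≤ t) (h2 : f v ≤ s) :
    ∃ u' v', u ≤ u' ∧ u' ≤ v' ∧ v' ≤ v ∧ f u' = t ∧ f v' = s ∧
      Set.MapsTo f (Set.Icc u' v') (Set.Icc s t) := by
  set F : ℝ → ℝ := fun x => f (u + v - x) with hFdef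
  have hrefl : ∀ x ∈ Set.Icc u v, u + v - x ∈ Set.Icc u v := by
    intro x hx
    exact ⟨by linarith [hx.2], by linarith [hx.1]⟩
  have hF : ContinuousOn F (Set.Icc u v) := by
    apply hf.comp (by fun_prop) hrefl
  have hFu : F u = f v := by simp [hFdef]
  have hFv : F v = f u := by simp [hFdef]
  obtain ⟨u'', v'', h1', h2', h3', hFu'', hFv'', hmap⟩ :=
    cover_lemma F u v s t huv hF (by rw [hFu]; exact h2) hst (by rw [hFv]; exact h1)
  refine ⟨u + v - v'', u + v - u'', by linarith, by linarith, by linarith,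
    by simpa [hFdef] using hFv'', by simpa [hFdef] using hFu'', ?_⟩
  intro x hx
  have : u + v - x ∈ Set.Icc u'' v'' := ⟨by linarith [hx.2], by linarith [hx.1]⟩
  have := hmap this
  simpa [hFdef] using this

/-- **Li–Yorke period-three lemma.** If `a < b < c`, `g` is continuous on
`[a,c]`, `g(a) = b`, `g(b) = c` and `g(c) ≤ a`, then `g` has a point `p ∈ [a,c]` whose first
two iterates stay in `[a,c]`, with `g³(p) = p` and `g(p) ≠ p`, i.e. a periodic point of
period 3. -/
theorem exists_period_three_point
    (a b c : ℝ) (hab : a < b) (hbc : b < c)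
    (g : ℝ → ℝ) (hg : ContinuousOn g (Set.Icc a c))
    (hga : g a = b) (hgb : g b = c) (hgc : g c ≤ a) :
    ∃ p ∈ Set.Icc a c, g p ∈ Set.Icc a c ∧ g (g p) ∈ Set.Icc a c ∧
      g (g (g p)) = p ∧ g p ≠ p := by
  have hac : a ≤ c := le_trans hab.le hbc.le
  have hgab : ContinuousOn g (Set.Icc a b) := hg.mono (Set.Icc_subset_Icc le_rfl hbc.le)
  have hgbc : ContinuousOn g (Set.Icc b c) := hg.mono (Set.Icc_subset_Icc hab.le le_rfl)
  -- Step A: interval in [a,b] mapping into [b,c]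
  obtain ⟨u₂, v₂, hau₂, hu₂v₂, hv₂b, hgu₂, hgv₂, hmap₂⟩ :=
    cover_lemma g a b b c hab.le hgab (le_of_eq hga) hbc.le (le_of_eq hgb.symm)
  -- Step B: interval in [b,c] mapping into [u₂,v₂]
  obtain ⟨u₁, v₁, hbu₁, hu₁v₁, hv₁c, hgu₁, hgv₁, hmap₁⟩ :=
    cover_lemma' g b c u₂ v₂ hbc.le hgbc (by rw [hgb]; exact le_trans hv₂b hbc.le)
      hu₂v₂ (le_trans hgc hau₂)
  -- Step C: interval in [b,c] mapping into [u₁,v₁]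
  obtain ⟨u₀, v₀, hbu₀, hu₀v₀, hv₀c, hgu₀, hgv₀, hmap₀⟩ :=
    cover_lemma' g b c u₁ v₁ hbc.le hgbc (by rw [hgb]; exact hv₁c)
      hu₁v₁ (le_trans hgc (le_trans hab.le hbu₁))
  -- subset facts
  have hsub₀ : Set.Icc u₀ v₀ ⊆ Set.Icc a c :=
    Set.Icc_subset_Icc (le_trans hab.le hbu₀) hv₀c
  have hsub₁ : Set.Icc u₁ v₁ ⊆ Set.Icc a c :=
    Set.Icc_subset_Icc (le_trans hab.le hbu₁) hv₁c
  have hsub₂ : Set.Icc u₂ v₂ ⊆ Set.Icc a c :=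
    Set.Icc_subset_Icc hau₂ (le_trans hv₂b hbc.le)
  -- continuity of g³ on [u₀,v₀]
  have hc0 : ContinuousOn g (Set.Icc u₀ v₀) := hg.mono hsub₀
  have hc1 : ContinuousOn g (Set.Icc u₁ v₁) := hg.mono hsub₁
  have hc2 : ContinuousOn g (Set.Icc u₂ v₂) := hg.mono hsub₂
  set h : ℝ → ℝ := fun x => g (g (g x)) with hhdef
  have hch : ContinuousOn h (Set.Icc u₀ v₀) :=
    (hc2.comp (hc1.comp hc0 hmap₀) (hmap₁.comp hmap₀)).congr (fun x _ => rfl)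
  -- endpoint values of h
  have hhu₀ : h u₀ = b := by simp only [hhdef, hgu₀, hgv₁, hgu₂]
  have hhv₀ : h v₀ = c := by simp only [hhdef, hgv₀, hgu₁, hgv₂]
  -- fixed point of h via IVT
  set φ : ℝ → ℝ := fun x => h x - x with hφdef
  have hcφ : ContinuousOn φ (Set.Icc u₀ v₀) := hch.sub continuousOn_id
  have h0 : (0 : ℝ) ∈ Set.Icc (φ u₀) (φ v₀) := by
    constructor
    · simp only [hφdef, hhu₀]; linarith
    · simp only [hφdef, hhv₀]; linarith
  obtain ⟨p, hp, hφp⟩ := intermediate_value_Icc hu₀v₀ hcφ h0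
  have hper : h p = p := by
    have : h p - p = 0 := hφp
    linarith
  have hp1 : g p ∈ Set.Icc u₁ v₁ := hmap₀ hp
  have hp2 : g (g p) ∈ Set.Icc u₂ v₂ := hmap₁ hp1
  refine ⟨p, hsub₀ hp, hsub₁ hp1, hsub₂ hp2, hper, ?_⟩
  intro hfix
  have hpb2 : g (g p) = p := by rw [hfix, hfix]
  have hpab : p ∈ Set.Icc u₂ v₂ := hpb2 ▸ hp2
  have hpeqb : p = b := le_antisymm (le_trans hpab.2 hv₂b) (le_trans hbu₀ hp.1)
  rw [hpeqb] at hfix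
  rw [hgb] at hfix
  exact absurd hfix (ne_of_gt hbc)
end

section
/- For every step size d ∈ (0,1) there exist μ > 1/2 and a point p > 0 such that, letting F : ℝ → [0,1] be the Uniform[μ − 1/2, μ + 1/2] cumulative distribution function and g(b) := b·(1 + d·(1 − 2F(b))), one has g³(p) = p and g(p) ≠ p. In particular, for every d ∈ (0,1) there is a uniform valuation distribution for which the simplified non-atomic base fee dynamics possess a periodic orbit of period 3, and hence a trajectory that does not converge to the fixed point. -/
set_option maxHeartbeats 1600000 in
/-- For every step size `d ∈ (0,1)` there exist `μ > 1/2` and a point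
`p > 0` such that, for the Uniform[μ − 1/2, μ + 1/2] CDF
`F(b) = max 0 (min (b − μ + 1/2) 1)` and the base fee map `g(b) = b·(1 + d·(1 − 2F(b)))`,
one has `g³(p) = p` and `g(p) ≠ p`: the dynamics possess a periodic orbit of period 3. -/
theorem exists_period_three_orbit
    (d : ℝ) (hd0 : 0 < d) (hd1 : d < 1) :
    ∃ μ : ℝ, 1 / 2 < μ ∧ ∃ p : ℝ, 0 < p ∧
      ∀ F g : ℝ → ℝ,
        (∀ b, F b = max 0 (min (b - μ + 1 / 2) 1)) →
        (∀ b, g b = b * (1 + d * (1 - 2 * F b))) →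
        g (g (g p)) = p ∧ g p ≠ p := by
  by_cases hcase : d ^ 2 + d ≤ 1
  · -- small d : orbit  p (below) → p2 (middle) → p3 (above) → p
    have h1d : (0:ℝ) < 1 - d ^ 2 := by nlinarith
    have h1pd : (0:ℝ) < 1 + d := by linarith
    have h1d' : (1:ℝ) - d ^ 2 ≠ 0 := ne_of_gt h1d
    have h1pd' : (1:ℝ) + d ≠ 0 := ne_of_gt h1pd
    set e : ℝ := d / (2 * (1 - d ^ 2)) with he_def
    have he0 : 0 ≤ e := by positivity
    have he : e ≤ 1 / 2 := by
      rw [he_def, div_le_iff₀ (by linarith)]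
      nlinarith
    set μ : ℝ := 1 / d ^ 2 + 1 / (2 * d) + 1 with hμ_def
    have hdμ : d ^ 2 * μ = 1 + d / 2 + d ^ 2 := by
      rw [hμ_def]; field_simp
    set p2 : ℝ := μ - e with hp2_def
    have hμ1 : (1:ℝ) ≤ μ := by
      have h0 : (0:ℝ) ≤ 1 / d ^ 2 + 1 / (2 * d) := by positivity
      rw [hμ_def]; linarith
    have hp2pos : 0 < p2 := by rw [hp2_def]; linarith
    set p : ℝ := p2 / (1 + d) with hp_def
    set p3 : ℝ := p2 / (1 - d ^ 2) with hp3_def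
    have hppos : 0 < p := by rw [hp_def]; positivity
    have hp_le : p ≤ μ - 1 / 2 := by
      rw [hp_def, div_le_iff₀ h1pd, hp2_def]
      nlinarith
    have hp3_ge : μ + 1 / 2 ≤ p3 := by
      rw [hp3_def, le_div_iff₀ h1d, hp2_def]
      nlinarith
    refine ⟨μ, by linarith, p, hppos, ?_⟩
    intro F g hF hg
    have hFp : F p = 0 := by
      rw [hF p, min_eq_left (by linarith), max_eq_left (by linarith)]
    have hFp2 : F p2 = 1 / 2 - e := by
      have h1 : p2 - μ + 1 / 2 = 1 / 2 - e := by rw [hp2_def]; ring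
      rw [hF p2, h1, min_eq_left (by linarith), max_eq_right (by linarith)]
    have hFp3 : F p3 = 1 := by
      rw [hF p3, min_eq_right (by linarith), max_eq_right (by linarith)]
    have hg1 : g p = p2 := by
      rw [hg p, hFp, hp_def]
      field_simp; ring
    have hg2 : g p2 = p3 := by
      rw [hg p2, hFp2, hp3_def, he_def]
      field_simp; ring
    have hg3 : g p3 = p := by
      rw [hg p3, hFp3, hp3_def, hp_def]
      field_simp; ring
    refine ⟨by rw [hg1, hg2, hg3], ?_⟩
    rw [hg1]
    intro hcontra
    rw [hp_def] at hcontra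
    rw [eq_div_iff h1pd'] at hcontra
    nlinarith
  · -- large d : orbit  p (below) → p1 (below) → q (middle) → p
    push_neg at hcase
    have h1pd : (0:ℝ) < 1 + d := by linarith
    have h1pd' : (1:ℝ) + d ≠ 0 := ne_of_gt h1pd
    set c : ℝ := (d + 2) / (2 * (1 + d) ^ 2) with hc_def
    have hc0 : 0 < c := by positivity
    have hc : c ≤ 1 / 2 := by
      rw [hc_def, div_le_iff₀ (by positivity)]
      nlinarith
    set μ : ℝ := 3 / (2 * d) + 1 with hμ_def
    have hdμ : d * μ = 3 / 2 + d := by rw [hμ_def]; field_simp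
    have hμ1 : (1:ℝ) ≤ μ := by
      have h0 : (0:ℝ) ≤ 3 / (2 * d) := by positivity
      rw [hμ_def]; linarith
    set q : ℝ := μ + c with hq_def
    have hqpos : 0 < q := by rw [hq_def]; linarith
    set p1 : ℝ := q / (1 + d) with hp1_def
    set p : ℝ := p1 / (1 + d) with hp_def
    have hp1pos : 0 < p1 := by rw [hp1_def]; positivity
    have hppos : 0 < p := by rw [hp_def]; positivity
    have hp1_le : p1 ≤ μ - 1 / 2 := by
      rw [hp1_def, div_le_iff₀ h1pd, hq_def]
      nlinarith
    have hp_le : p ≤ μ - 1 / 2 := by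
      have : p ≤ p1 := by
        rw [hp_def, div_le_iff₀ h1pd]
        nlinarith
      linarith
    refine ⟨μ, by linarith, p, hppos, ?_⟩
    intro F g hF hg
    have hFp : F p = 0 := by
      rw [hF p, min_eq_left (by linarith), max_eq_left (by linarith)]
    have hFp1 : F p1 = 0 := by
      rw [hF p1, min_eq_left (by linarith), max_eq_left (by linarith)]
    have hFq : F q = 1 / 2 + c := by
      have h1 : q - μ + 1 / 2 = 1 / 2 + c := by rw [hq_def]; ring
      rw [hF q, h1, min_eq_left (by linarith), max_eq_right (by linarith)]
    have hg1 : g p = p1 := by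
      rw [hg p, hFp, hp_def]
      field_simp; ring
    have hg2 : g p1 = q := by
      rw [hg p1, hFp1, hp1_def]
      field_simp; ring
    have hg3 : g q = p := by
      have hkey : 1 + d * (1 - 2 * (1 / 2 + c)) = 1 / (1 + d) ^ 2 := by
        rw [hc_def]; field_simp; ring
      rw [hg q, hFq, hkey, hp_def, hp1_def, mul_one_div, div_div, sq]
    refine ⟨by rw [hg1, hg2, hg3], ?_⟩
    rw [hg1]
    intro hcontra
    rw [hp_def] at hcontra
    rw [eq_div_iff h1pd'] at hcontra
    nlinarith
end
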